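/- Let f, g be twice continuously differentiable functions on a compact interval J with ‖f−g‖_{C²(J)} ≤ K, let I ⊆ J/4 be an interval, let λ ≥ 1, and let 0 < δ ≤ ‖f−g‖_{C²(J)}/(6K). If |f(θ)−g(θ)| ≤ δ for all θ ∈ I, then |f(θ)−g(θ)| ≤ Cλ²δ for all θ ∈ λI ∩ J, where C = C(K) is a constant depending only on K, provided the standing dichotomy assumption and cinematic pair condition of constant K hold for f and g. -/

import Mathlib

open Set

/-- The `C²(J)` distance between two functions. -/
noncomputable def c2dist (J : Set ℝ) (f g : ℝ → ℝ) : ℝ :=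
  sSup ((fun θ => |f θ - g θ| + |deriv f θ - deriv g θ| +
      |deriv (deriv f) θ - deriv (deriv g) θ|) '' J)

/-- `λ·[u,v]`: the interval concentric with `[u,v]` of `λ` times the length. -/
def subIcc (lam u v : ℝ) : Set ℝ :=
  Set.Icc ((u + v) / 2 - lam * (v - u) / 2) ((u + v) / 2 + lam * (v - u) / 2)

/-- The curvilinear region of vertical thickness `δ` about the graph of `f`
over the set `S`. -/
def rectOn (f : ℝ → ℝ) (δ : ℝ) (S : Set ℝ) : Set (ℝ × ℝ) :=
  {x : ℝ × ℝ | x.1 ∈ S ∧ |x.2 - f x.1| ≤ δ}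

/-- `f^δ(I)` where `I = [c, c + √(δ/t)]`: a `(δ,t)`-rectangle with left
endpoint `c`. -/
noncomputable def rectSet (f : ℝ → ℝ) (δ t c : ℝ) : Set (ℝ × ℝ) :=
  rectOn f δ (Set.Icc c (c + Real.sqrt (δ / t)))

/-- `R` is a `(δ,t)`-rectangle `f^δ(I)` with `f ∈ 𝓖` and `I ⊆ Jsub` an
interval of length `√(δ/t)`. -/
def IsRect (𝓖 : Set (ℝ → ℝ)) (Jsub : Set ℝ) (δ t : ℝ) (R : Set (ℝ × ℝ)) : Prop :=
  ∃ f ∈ 𝓖, ∃ c : ℝ, Set.Icc c (c + Real.sqrt (δ / t)) ⊆ Jsub ∧ R = rectSet f δ t c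

/-- Two rectangles are `λ`-comparable if some `(λδ,t)`-rectangle (with
function from `𝓖` over an interval in `J`) contains their union. -/
def Comparable (𝓖 : Set (ℝ → ℝ)) (J : Set ℝ) (δ t lam : ℝ) (R R' : Set (ℝ × ℝ)) : Prop :=
  ∃ R'' : Set (ℝ × ℝ), IsRect 𝓖 J (lam * δ) t R'' ∧ R ∪ R' ⊆ R''

/-- `f^s`, the vertical `s`-neighborhood of the graph of `f` over `J`. -/
def vtube (J : Set ℝ) (f : ℝ → ℝ) (s : ℝ) : Set (ℝ × ℝ) :=
  {p : ℝ × ℝ | p.1 ∈ J ∧ |f p.1 - p.2| ≤ s}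

/-- `R` is `λ`-tangent to `f`: `R ⊆ f^{λδ}`. -/
def Tangent (J : Set ℝ) (δ lam : ℝ) (f : ℝ → ℝ) (R : Set (ℝ × ℝ)) : Prop :=
  R ⊆ vtube J f (lam * δ)

/-- A family of cinematic functions over `J` with cinematic constant `K`. -/
def CinematicFamily (J : Set ℝ) (K : ℝ) (𝓕 : Set (ℝ → ℝ)) : Prop :=
  (∀ f ∈ 𝓕, ContDiff ℝ 2 f) ∧
  (∀ f ∈ 𝓕, ∀ g ∈ 𝓕, c2dist J f g ≤ K) ∧
  (∀ f ∈ 𝓕, ∀ g ∈ 𝓕, ∀ θ ∈ J, K⁻¹ * c2dist J f g ≤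
      |f θ - g θ| + |deriv f θ - deriv g θ| + |deriv (deriv f) θ - deriv (deriv g) θ|)

/-- Alternative (S)/(L) dichotomy for a single function `k` at scale `t`:
either `|k| < κ t` everywhere on `J`, or `|k| ≥ κ t / 2` everywhere on `J`. -/
def DichotomyAt (J : Set ℝ) (κ t : ℝ) (k : ℝ → ℝ) : Prop :=
  (∀ θ ∈ J, |k θ| < κ * t) ∨ (∀ θ ∈ J, κ * t / 2 ≤ |k θ|)

/-- Alternative (L): `|k| ≥ κ t / 2` everywhere on `J`. -/
def LargeAlt (J : Set ℝ) (κ t : ℝ) (k : ℝ → ℝ) : Prop :=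
  ∀ θ ∈ J, κ * t / 2 ≤ |k θ|

/-- The standing dichotomy assumption for the pair `(f,g)` with parameter `κ`:
each of `f-g`, `f'-g'`, `f''-g''` satisfies alternative (S) or alternative (L)
on all of `J` (at scale `‖f-g‖_{C²(J)}`), and at least one of the three
satisfies alternative (L). -/
def Dichotomy (J : Set ℝ) (κ : ℝ) (f g : ℝ → ℝ) : Prop :=
  DichotomyAt J κ (c2dist J f g) (fun θ => f θ - g θ) ∧
  DichotomyAt J κ (c2dist J f g) (fun θ => deriv f θ - deriv g θ) ∧
  DichotomyAt J κ (c2dist J f g) (fun θ => deriv (deriv f) θ - deriv (deriv g) θ) ∧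
  (LargeAlt J κ (c2dist J f g) (fun θ => f θ - g θ) ∨
   LargeAlt J κ (c2dist J f g) (fun θ => deriv f θ - deriv g θ) ∨
   LargeAlt J κ (c2dist J f g) (fun θ => deriv (deriv f) θ - deriv (deriv g) θ))

/-- The cinematic pair condition of constant `K` for two `C²` functions:
`|f-g| + |f'-g'| + |f''-g''| ≥ K⁻¹ ‖f-g‖_{C²(J)}` pointwise on `J`, and
`‖f-g‖_{C²(J)} ≤ K`. -/
def CinematicPair (J : Set ℝ) (K : ℝ) (f g : ℝ → ℝ) : Prop :=
  ContDiff ℝ 2 f ∧ ContDiff ℝ 2 g ∧ c2dist J f g ≤ K ∧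
  ∀ θ ∈ J, K⁻¹ * c2dist J f g ≤
    |f θ - g θ| + |deriv f θ - deriv g θ| + |deriv (deriv f) θ - deriv (deriv g) θ|

/-- Mean value theorem, product form. -/
lemma pyz_mvt (k : ℝ → ℝ) (hk : Differentiable ℝ k) {x y : ℝ} (hxy : x < y) :
    ∃ ζ ∈ Set.Ioo x y, k y - k x = deriv k ζ * (y - x) := by
  obtain ⟨ζ, hζ, hd⟩ := exists_deriv_eq_slope k hxy hk.continuous.continuousOn hk.differentiableOn
  refine ⟨ζ, hζ, ?_⟩
  rw [hd, div_mul_cancel₀ _ (sub_ne_zero.mpr hxy.ne')]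

/-- Lipschitz estimate from a derivative bound on the interval between
two points. -/
lemma pyz_lip (k : ℝ → ℝ) (hk : Differentiable ℝ k) (M : ℝ) {x y : ℝ}
    (hM : ∀ z ∈ Set.Icc (min x y) (max x y), |deriv k z| ≤ M) :
    |k y - k x| ≤ M * |y - x| := by
  rcases lt_trichotomy x y with h | h | h
  · obtain ⟨ζ, hζ, he⟩ := pyz_mvt k hk h
    have hζ' : ζ ∈ Set.Icc (min x y) (max x y) := by
      constructor
      · exact le_trans (min_le_left _ _) hζ.1.le
      · exact le_trans hζ.2.le (le_max_right _ _)
    rw [he, abs_mul]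
    have h1 := hM ζ hζ'
    have h2 : |y - x| = |y - x| := rfl
    have : (0:ℝ) ≤ |y - x| := abs_nonneg _
    nlinarith [abs_nonneg (deriv k ζ)]
  · subst h
    simp
  · obtain ⟨ζ, hζ, he⟩ := pyz_mvt k hk h
    have hζ' : ζ ∈ Set.Icc (min x y) (max x y) := by
      constructor
      · exact le_trans (min_le_right _ _) hζ.1.le
      · exact le_trans hζ.2.le (le_max_left _ _)
    have he' : k y - k x = deriv k ζ * (y - x) := by
      have := he
      nlinarith [he]
    rw [he', abs_mul]
    nlinarith [hM ζ hζ', abs_nonneg (deriv k ζ), abs_nonneg (y - x)]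

set_option maxHeartbeats 1600000 in
/-- **Lemma 3.9** of Pramanik–Yang–Zahl: if `|f - g| ≤ δ` on an interval
`I ⊆ J/4` (with `δ ≤ ‖f-g‖/(6K)`), then `|f - g| ≲ λ²δ` on `λI ∩ J`. -/
theorem roughly_constant_on_dilate (K : ℝ) (hK : 1 ≤ K) :
    ∃ C : ℝ, 0 < C ∧
    ∀ a b : ℝ, a ≤ b →
    ∀ f g : ℝ → ℝ, CinematicPair (Set.Icc a b) K f g →
      Dichotomy (Set.Icc a b) (3 * K)⁻¹ f g →
    ∀ lam : ℝ, 1 ≤ lam →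
    ∀ δ : ℝ, 0 < δ → δ ≤ c2dist (Set.Icc a b) f g / (6 * K) →
    ∀ u v : ℝ, u ≤ v → Set.Icc u v ⊆ subIcc (1/4) a b →
      (∀ θ ∈ Set.Icc u v, |f θ - g θ| ≤ δ) →
      ∀ θ ∈ subIcc lam u v ∩ Set.Icc a b, |f θ - g θ| ≤ C * lam ^ 2 * δ := by
  refine ⟨300 * K, by linarith, ?_⟩
  intro a b hab f g hpair hdich lam hlam δ hδ hδt u v huv hIJ4 hI θ hθ
  obtain ⟨hf, hg, hKb, hcin⟩ := hpair
  obtain ⟨D0, D1, D2, Dlarge⟩ := hdich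
  have hK0 : (0:ℝ) < K := by linarith
  have hlam0 : (0:ℝ) ≤ lam := by linarith
  have hl2 : lam ≤ lam ^ 2 := by
    linarith [mul_le_mul_of_nonneg_left hlam hlam0]
  have hl1 : (1:ℝ) ≤ lam ^ 2 := by linarith
  -- derivative facts
  have hfd : Differentiable ℝ f := hf.differentiable two_ne_zero
  have hgd : Differentiable ℝ g := hg.differentiable two_ne_zero
  have hf1 : ContDiff ℝ 1 (deriv f) := by
    have h2 : ContDiff ℝ (1+1) f := by norm_num; exact hf
    exact (contDiff_succ_iff_deriv.mp h2).2.2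
  have hg1 : ContDiff ℝ 1 (deriv g) := by
    have h2 : ContDiff ℝ (1+1) g := by norm_num; exact hg
    exact (contDiff_succ_iff_deriv.mp h2).2.2
  have hfd1 : Differentiable ℝ (deriv f) := hf1.differentiable one_ne_zero
  have hgd1 : Differentiable ℝ (deriv g) := hg1.differentiable one_ne_zero
  set h : ℝ → ℝ := fun x => f x - g x with hh
  set h1 : ℝ → ℝ := fun x => deriv f x - deriv g x with hh1
  set h2 : ℝ → ℝ := fun x => deriv (deriv f) x - deriv (deriv g) x with hh2
  have hhd : Differentiable ℝ h := hfd.sub hgd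
  have hh1d : Differentiable ℝ h1 := hfd1.sub hgd1
  have hdh : deriv h = h1 := funext fun x => deriv_sub (hfd x) (hgd x)
  have hdh1 : deriv h1 = h2 := funext fun x => deriv_sub (hfd1 x) (hgd1 x)
  set t := c2dist (Set.Icc a b) f g with htdef
  have hδt' : 6 * K * δ ≤ t := by
    have := (le_div_iff₀ (by positivity : (0:ℝ) < 6 * K)).mp hδt
    linarith
  have ht : (0:ℝ) < t := by
    have : (0:ℝ) < 6 * K * δ := by positivity
    linarith
  -- sup bound
  have hsup : ∀ x ∈ Set.Icc a b, |h x| + |h1 x| + |h2 x| ≤ t := by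
    intro x hx
    have hcont : Continuous (fun θ => |f θ - g θ| + |deriv f θ - deriv g θ| +
        |deriv (deriv f) θ - deriv (deriv g) θ|) := by
      refine Continuous.add (Continuous.add ?_ ?_) ?_
      · exact (hfd.continuous.sub hgd.continuous).abs
      · exact ((hf.continuous_deriv one_le_two).sub (hg.continuous_deriv one_le_two)).abs
      · exact ((hf1.continuous_deriv le_rfl).sub (hg1.continuous_deriv le_rfl)).abs
    exact le_csSup (isCompact_Icc.image_of_continuousOn hcont.continuousOn).bddAbove
      (Set.mem_image_of_mem _ hx)
  have hb0 : ∀ x ∈ Set.Icc a b, |h x| ≤ t := by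
    intro x hx
    have := hsup x hx
    have := abs_nonneg (h1 x); have := abs_nonneg (h2 x); linarith
  have hb1 : ∀ x ∈ Set.Icc a b, |h1 x| ≤ t := by
    intro x hx
    have := hsup x hx
    have := abs_nonneg (h x); have := abs_nonneg (h2 x); linarith
  have hb2 : ∀ x ∈ Set.Icc a b, |h2 x| ≤ t := by
    intro x hx
    have := hsup x hx
    have := abs_nonneg (h x); have := abs_nonneg (h1 x); linarith
  -- geometry
  have hsub4 : subIcc (1/4) a b ⊆ Set.Icc a b := by
    apply Set.Icc_subset_Icc <;> linarith
  have hIJ : Set.Icc u v ⊆ Set.Icc a b := hIJ4.trans hsub4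
  have hu : u ∈ Set.Icc a b := hIJ ⟨le_rfl, huv⟩
  have hv : v ∈ Set.Icc a b := hIJ ⟨huv, le_rfl⟩
  have hθJ : θ ∈ Set.Icc a b := hθ.2
  have hθ1 : (u + v) / 2 - lam * (v - u) / 2 ≤ θ := hθ.1.1
  have hθ2 : θ ≤ (u + v) / 2 + lam * (v - u) / 2 := hθ.1.2
  have hI' : ∀ x ∈ Set.Icc u v, |h x| ≤ δ := hI
  show |h θ| ≤ 300 * K * lam ^ 2 * δ
  clear hh hh1 hh2 htdef hcin hKb D0 D1 D2 hI hδt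
  clear_value h h1 h2 t
  -- the clamp point
  set p : ℝ := max u (min v θ) with hp
  have hpI : p ∈ Set.Icc u v := ⟨le_max_left _ _, max_le huv (min_le_left _ _)⟩
  have hpJ : p ∈ Set.Icc a b := hIJ hpI
  clear_value p
  have hLnn : (0:ℝ) ≤ v - u := by linarith
  have hlamnn : (0:ℝ) ≤ lam := by linarith
  have hml0 : (0:ℝ) ≤ lam * (v - u) := mul_nonneg hlamnn hLnn
  have hd : |θ - p| ≤ lam * (v - u) / 2 := by
    rcases le_total θ u with hc | hc
    · have hpu : p = u := by
        rw [hp, min_eq_right (le_trans hc huv), max_eq_left hc]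
      rw [hpu]
      rw [abs_le]
      constructor <;> linarith
    · rcases le_total v θ with hc' | hc'
      · have hpv : p = v := by
          rw [hp, min_eq_left hc', max_eq_right huv]
        rw [hpv, abs_le]
        constructor <;> linarith
      · have hpθ : p = θ := by
          rw [hp, min_eq_right hc', max_eq_right hc]
        rw [hpθ]
        simp
        positivity
  have hdnn : (0:ℝ) ≤ |θ - p| := abs_nonneg _
  have hhp : |h p| ≤ δ := hI' p hpI
  -- points between p and θ are in J
  have hseg : Set.Icc (min p θ) (max p θ) ⊆ Set.Icc a b := by
    intro z hz
    exact ⟨le_trans (le_min hpJ.1 hθJ.1) hz.1, le_trans hz.2 (max_le hpJ.2 hθJ.2)⟩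
  -- from LargeAlt get t ≤ 6K * |·|
  have hconv : ∀ X : ℝ, (3 * K)⁻¹ * t / 2 ≤ X → t ≤ 6 * K * X := by
    intro X hX
    have e : 6 * K * ((3 * K)⁻¹ * t / 2) = t := by
      field_simp
      ring
    linarith [mul_le_mul_of_nonneg_left hX (by positivity : (0:ℝ) ≤ 6 * K)]
  -- trivial degenerate case u = v
  rcases eq_or_lt_of_le huv with rfl | hlt
  · have e : lam * (u - u) / 2 = 0 := by ring
    have hθu : θ = u := by linarith
    rw [hθu]
    have h5 := hI' u ⟨le_rfl, le_rfl⟩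
    have h6 : (1:ℝ) ≤ K * lam ^ 2 := by
      linarith [mul_le_mul hK hl1 zero_le_one hK0.le]
    have h7 := mul_le_mul_of_nonneg_right h6 hδ.le
    have h8 : (0:ℝ) ≤ K * lam ^ 2 * δ :=
      mul_nonneg (mul_nonneg hK0.le (sq_nonneg lam)) hδ.le
    linarith
  rcases Dlarge with HL | HL | HL
  · -- case A : h itself is large, so t ≤ 6Kδ
    have h1u : t ≤ 6 * K * |h u| := hconv _ (HL u hu)
    have h2u : |h u| ≤ δ := hI' u ⟨le_rfl, huv⟩
    have hbθ := hb0 θ hθJ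
    have h3 : 6 * K * |h u| ≤ 6 * K * δ :=
      mul_le_mul_of_nonneg_left h2u (by positivity)
    have h4 : 6 * K * δ ≤ 300 * K * lam ^ 2 * δ := by
      have i1 := mul_le_mul_of_nonneg_left hl1 (by positivity : (0:ℝ) ≤ 6 * K * δ)
      have i2 : (0:ℝ) ≤ K * lam ^ 2 * δ :=
        mul_nonneg (mul_nonneg hK0.le (sq_nonneg lam)) hδ.le
      linarith [i1, i2]
    linarith
  · -- case B : h' is large
    obtain ⟨ζ, hζ, he⟩ := pyz_mvt h hhd hlt
    rw [hdh] at he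
    have hζJ : ζ ∈ Set.Icc a b := hIJ ⟨hζ.1.le, hζ.2.le⟩
    have ht6 : t ≤ 6 * K * |h1 ζ| := hconv _ (HL ζ hζJ)
    have e1 : |h v - h u| ≤ 2 * δ := by
      have a1 := abs_le.mp (hI' v ⟨huv, le_rfl⟩)
      have a2 := abs_le.mp (hI' u ⟨le_rfl, huv⟩)
      rw [abs_le]; constructor <;> linarith
    have e2 : |h1 ζ| * (v - u) ≤ 2 * δ := by
      have : |h v - h u| = |h1 ζ| * (v - u) := by
        rw [he, abs_mul, abs_of_nonneg hLnn]
      linarith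
    have htL : t * (v - u) ≤ 12 * K * δ := by
      linarith [mul_le_mul_of_nonneg_right ht6 hLnn,
        mul_le_mul_of_nonneg_left e2 (by positivity : (0:ℝ) ≤ 6 * K)]
    have hlip : |h θ - h p| ≤ t * |θ - p| := by
      apply pyz_lip h hhd
      intro z hz
      rw [hdh]
      exact hb1 z (hseg hz)
    have habs : |h θ| ≤ |h p| + |h θ - h p| := by
      have := abs_sub_abs_le_abs_sub (h θ) (h p)
      linarith
    have e3 : t * |θ - p| ≤ 6 * K * lam * δ := by
      linarith [mul_le_mul_of_nonneg_left hd ht.le,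
        mul_le_mul_of_nonneg_left htL (by linarith : (0:ℝ) ≤ lam / 2)]
    have ea : 6 * K * lam * δ ≤ 6 * K * lam ^ 2 * δ := by
      linarith [mul_le_mul_of_nonneg_left hl2 (by positivity : (0:ℝ) ≤ 6 * K * δ)]
    have eb : δ ≤ K * lam ^ 2 * δ := by
      have e0 : (1:ℝ) ≤ K * lam ^ 2 := by
        linarith [mul_le_mul hK hl1 zero_le_one hK0.le]
      linarith [mul_le_mul_of_nonneg_right e0 hδ.le]
    have ec : (0:ℝ) ≤ K * lam ^ 2 * δ :=
      mul_nonneg (mul_nonneg hK0.le (sq_nonneg lam)) hδ.le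
    linarith
  · -- case C : h'' is large
    set L := v - u with hLdef
    clear_value L
    have hL : 0 < L := by simp [hLdef]; linarith
    set w1 := u + L / 3 with hw1
    set w2 := v - L / 3 with hw2
    clear_value w1 w2
    have hw1I : w1 ∈ Set.Icc u v := by constructor <;> simp [hw1, hLdef] <;> linarith
    have hw2I : w2 ∈ Set.Icc u v := by constructor <;> simp [hw2, hLdef] <;> linarith
    obtain ⟨ξ₁, hξ₁, he1⟩ := pyz_mvt h hhd (by simp [hw1]; linarith : u < w1)
    obtain ⟨ξ₂, hξ₂, he2⟩ := pyz_mvt h hhd (by simp [hw2]; linarith : w2 < v)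
    rw [hdh] at he1 he2
    have hξ₁I : ξ₁ ∈ Set.Icc u v := ⟨hξ₁.1.le, le_trans hξ₁.2.le hw1I.2⟩
    have hξ₂I : ξ₂ ∈ Set.Icc u v := ⟨le_trans hw2I.1 hξ₂.1.le, hξ₂.2.le⟩
    have hξξ : ξ₁ < ξ₂ := by
      have : w1 ≤ w2 := by simp [hw1, hw2]; linarith
      exact lt_of_lt_of_le hξ₁.2 (le_trans this hξ₂.1.le)
    have hgap : L / 3 ≤ ξ₂ - ξ₁ := by
      have := hξ₁.2; have := hξ₂.1; simp [hw1, hw2] at *; linarith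
    -- |h1 ξᵢ| * L ≤ 6δ
    have B1 : |h1 ξ₁| * L ≤ 6 * δ := by
      have a1 := abs_le.mp (hI' w1 hw1I)
      have a2 := abs_le.mp (hI' u ⟨le_rfl, huv⟩)
      have e : |h1 ξ₁| * (L / 3) = |h w1 - h u| := by
        rw [he1, abs_mul, abs_of_nonneg (by simp [hw1]; linarith : (0:ℝ) ≤ w1 - u)]
        congr 1
        simp [hw1]
      have h2δ : |h w1 - h u| ≤ 2 * δ := by rw [abs_le]; constructor <;> linarith
      have e' : |h1 ξ₁| * L = 3 * |h w1 - h u| := by linear_combination 3 * e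
      linarith
    have B2 : |h1 ξ₂| * L ≤ 6 * δ := by
      have a1 := abs_le.mp (hI' v ⟨huv, le_rfl⟩)
      have a2 := abs_le.mp (hI' w2 hw2I)
      have e : |h1 ξ₂| * (L / 3) = |h v - h w2| := by
        rw [he2, abs_mul, abs_of_nonneg (by simp [hw2]; linarith : (0:ℝ) ≤ v - w2)]
        congr 1
        simp [hw2]
      have h2δ : |h v - h w2| ≤ 2 * δ := by rw [abs_le]; constructor <;> linarith
      have e' : |h1 ξ₂| * L = 3 * |h v - h w2| := by linear_combination 3 * e
      linarith
    -- second derivative bound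
    obtain ⟨ζ, hζ, he3⟩ := pyz_mvt h1 hh1d hξξ
    rw [hdh1] at he3
    have hζJ : ζ ∈ Set.Icc a b := hIJ ⟨le_trans hξ₁I.1 hζ.1.le, le_trans hζ.2.le hξ₂I.2⟩
    have ht6 : t ≤ 6 * K * |h2 ζ| := hconv _ (HL ζ hζJ)
    have e4 : |h2 ζ| * (ξ₂ - ξ₁) ≤ |h1 ξ₁| + |h1 ξ₂| := by
      have : |h1 ξ₂ - h1 ξ₁| = |h2 ζ| * (ξ₂ - ξ₁) := by
        rw [he3, abs_mul, abs_of_nonneg (by linarith : (0:ℝ) ≤ ξ₂ - ξ₁)]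
      linarith [abs_sub (h1 ξ₂) (h1 ξ₁)]
    have e5 : |h2 ζ| * L ^ 2 ≤ 36 * δ := by
      have k1 : |h2 ζ| * (L / 3) ≤ |h1 ξ₁| + |h1 ξ₂| := by
        linarith [mul_le_mul_of_nonneg_left hgap (abs_nonneg (h2 ζ))]
      linarith [mul_le_mul_of_nonneg_right k1 hL.le]
    have htL2 : t * L ^ 2 ≤ 216 * K * δ := by
      linarith [mul_le_mul_of_nonneg_right ht6 (by positivity : (0:ℝ) ≤ L ^ 2),
        mul_le_mul_of_nonneg_left e5 (by positivity : (0:ℝ) ≤ 6 * K)]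
    -- bound |h1 p|
    have hp1 : |h1 p - h1 ξ₁| ≤ t * |p - ξ₁| := by
      apply pyz_lip h1 hh1d
      intro z hz
      rw [hdh1]
      apply hb2
      have hξ₁J : ξ₁ ∈ Set.Icc a b := hIJ hξ₁I
      exact ⟨le_trans (le_min hξ₁J.1 hpJ.1) hz.1, le_trans hz.2 (max_le hξ₁J.2 hpJ.2)⟩
    have hpξ : |p - ξ₁| ≤ L := by
      rw [abs_le]
      constructor
      · have := hpI.1; have := hξ₁I.2; simp [hLdef]; linarith
      · have := hpI.2; have := hξ₁I.1; simp [hLdef]; linarith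
    have hh1p : |h1 p| ≤ |h1 ξ₁| + t * L := by
      have := abs_sub_abs_le_abs_sub (h1 p) (h1 ξ₁)
      linarith [mul_le_mul_of_nonneg_left hpξ ht.le]
    -- Lipschitz bound for h from p to θ
    have hlip : |h θ - h p| ≤ (|h1 p| + t * |θ - p|) * |θ - p| := by
      apply pyz_lip h hhd
      intro z hz
      rw [hdh]
      have hzJ : z ∈ Set.Icc a b := hseg hz
      have hzp : |z - p| ≤ |θ - p| := by
        rcases le_total p θ with hc | hc
        · rw [min_eq_left hc, max_eq_right hc] at hz
          rw [abs_of_nonneg (by linarith [hz.1] : (0:ℝ) ≤ z - p),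
            abs_of_nonneg (by linarith : (0:ℝ) ≤ θ - p)]
          linarith [hz.2]
        · rw [min_eq_right hc, max_eq_left hc] at hz
          rw [abs_of_nonpos (by linarith [hz.2] : z - p ≤ 0),
            abs_of_nonpos (by linarith : θ - p ≤ 0)]
          linarith [hz.1]
      have hzlip : |h1 z - h1 p| ≤ t * |z - p| := by
        apply pyz_lip h1 hh1d
        intro w hw
        rw [hdh1]
        apply hb2
        have hzJ' := hzJ
        exact ⟨le_trans (le_min hpJ.1 hzJ'.1) hw.1, le_trans hw.2 (max_le hpJ.2 hzJ'.2)⟩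
      have := abs_sub_abs_le_abs_sub (h1 z) (h1 p)
      linarith [mul_le_mul_of_nonneg_left hzp ht.le]
    -- final combination
    have habs : |h θ| ≤ |h p| + |h θ - h p| := by
      have := abs_sub_abs_le_abs_sub (h θ) (h p)
      linarith
    have c1 : |h1 ξ₁| * |θ - p| ≤ 3 * lam * δ := by
      linarith [mul_le_mul_of_nonneg_left hd (abs_nonneg (h1 ξ₁)),
        mul_le_mul_of_nonneg_left B1 (by linarith : (0:ℝ) ≤ lam / 2)]
    have c2 : (t * L) * |θ - p| ≤ 108 * K * lam * δ := by
      have j1 : (0:ℝ) ≤ t * L := mul_nonneg ht.le hL.le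
      linarith [mul_le_mul_of_nonneg_left hd j1,
        mul_le_mul_of_nonneg_left htL2 (by linarith : (0:ℝ) ≤ lam / 2)]
    have c3 : t * |θ - p| * |θ - p| ≤ 54 * K * lam ^ 2 * δ := by
      have hml : (0:ℝ) ≤ lam * L / 2 := by
        have := mul_nonneg hlamnn hL.le
        linarith
      have cdd : |θ - p| * |θ - p| ≤ (lam * L) ^ 2 / 4 := by
        linarith [mul_le_mul hd hd hdnn hml]
      linarith [mul_le_mul_of_nonneg_left cdd ht.le,
        mul_le_mul_of_nonneg_left htL2 (by positivity : (0:ℝ) ≤ lam ^ 2 / 4)]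
    have cp : |h1 p| * |θ - p| ≤ 3 * lam * δ + 108 * K * lam * δ := by
      linarith [mul_le_mul_of_nonneg_right hh1p hdnn, c1, c2]
    have e0 : (1:ℝ) ≤ K * lam ^ 2 := by
      linarith [mul_le_mul hK hl1 zero_le_one hK0.le]
    have efin : δ ≤ K * lam ^ 2 * δ := by
      linarith [mul_le_mul_of_nonneg_right e0 hδ.le]
    have efin2 : lam * δ ≤ K * lam ^ 2 * δ := by
      have j1 := mul_le_mul_of_nonneg_right hl2 hδ.le
      have j2 := mul_le_mul_of_nonneg_right hK
        (mul_nonneg (sq_nonneg lam) hδ.le)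
      linarith [j1, j2]
    have efin3 : K * lam * δ ≤ K * lam ^ 2 * δ := by
      have j1 := mul_le_mul_of_nonneg_left hl2 (mul_nonneg hK0.le hδ.le)
      linarith [j1]
    have ec : (0:ℝ) ≤ K * lam ^ 2 * δ :=
      mul_nonneg (mul_nonneg hK0.le (sq_nonneg lam)) hδ.le
    linarith [habs, hhp, hlip, cp, c3, efin, efin2, efin3, ec]
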